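/- Let H_2(p) = −p·log₂(p) − (1−p)·log₂(1−p) be the binary entropy function on (0,1). Then the equation H_2(2p) + H_2(p) = 1 has a solution p* in (0, 1/4), the function p ↦ H_2(2p) + H_2(p) is strictly increasing on (0, 1/4), and p* > 0.0756 while p* < 0.0757 (i.e., the threshold is approximately 7.56%). -/

import Mathlib

open Real Set

/-- The binary entropy function `H₂(p) = −p log₂ p − (1−p) log₂ (1−p)`. -/
noncomputable def H2 (p : ℝ) : ℝ := -p * Real.logb 2 p - (1 - p) * Real.logb 2 (1 - p)

lemma H2_eq_binEntropy (p : ℝ) : H2 p = Real.binEntropy p / Real.log 2 := by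
  unfold H2 Real.binEntropy Real.logb
  rw [Real.log_inv, Real.log_inv]
  ring

lemma logTaylor (x : ℝ) (hx : |x| < 1) :
    -(∑ i ∈ Finset.range 12, x ^ (i + 1) / (i + 1)) - |x| ^ 13 / (1 - |x|) ≤ Real.log (1 - x) ∧
    Real.log (1 - x) ≤ -(∑ i ∈ Finset.range 12, x ^ (i + 1) / (i + 1)) + |x| ^ 13 / (1 - |x|) := by
  have h := Real.abs_log_sub_add_sum_range_le hx 12
  rw [abs_le] at h
  exact ⟨by linarith [h.1], by linarith [h.2]⟩

lemma f_lt_at_a : H2 (2 * 0.0756) + H2 0.0756 < 1 := by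
  have hlog2 : (0:ℝ) < Real.log 2 := Real.log_pos (by norm_num)
  rw [show (2:ℝ) * 0.0756 = 0.1512 by norm_num, H2_eq_binEntropy, H2_eq_binEntropy,
    ← add_div, div_lt_one hlog2]
  unfold Real.binEntropy
  rw [Real.log_inv, Real.log_inv, Real.log_inv, Real.log_inv]
  have hsplit : Real.log 0.1512 = Real.log 2 + Real.log 0.0756 := by
    rw [show (0.1512:ℝ) = 2 * 0.0756 by norm_num,
      Real.log_mul (by norm_num) (by norm_num)]
  have hp : Real.log 0.0756 = Real.log 1.2096 - 4 * Real.log 2 := by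
    rw [show (0.0756:ℝ) = 1.2096 / 16 by norm_num,
      Real.log_div (by norm_num) (by norm_num), show (16:ℝ) = 2 ^ 4 by norm_num,
      Real.log_pow]
    push_cast
    ring
  have h1 := logTaylor (-0.2096) (by rw [show |(-0.2096:ℝ)| = 0.2096 by rw [abs_of_neg] <;> norm_num]; norm_num)
  rw [show (1:ℝ) - (-0.2096) = 1.2096 by norm_num,
    show |(-0.2096:ℝ)| = 0.2096 by rw [abs_of_neg] <;> norm_num] at h1
  simp only [Finset.sum_range_succ, Finset.sum_range_zero] at h1
  have h2 := logTaylor 0.1512 (by rw [show |(0.1512:ℝ)| = 0.1512 by rw [abs_of_pos] <;> norm_num]; norm_num)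
  rw [show (1:ℝ) - 0.1512 = 0.8488 by norm_num,
    show |(0.1512:ℝ)| = 0.1512 by rw [abs_of_pos] <;> norm_num] at h2
  simp only [Finset.sum_range_succ, Finset.sum_range_zero] at h2
  have h3 := logTaylor 0.0756 (by rw [show |(0.0756:ℝ)| = 0.0756 by rw [abs_of_pos] <;> norm_num]; norm_num)
  rw [show (1:ℝ) - 0.0756 = 0.9244 by norm_num,
    show |(0.0756:ℝ)| = 0.0756 by rw [abs_of_pos] <;> norm_num] at h3
  simp only [Finset.sum_range_succ, Finset.sum_range_zero] at h3
  rw [hsplit, hp]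
  norm_num at h1 h2 h3 ⊢
  linarith [Real.log_two_gt_d9, Real.log_two_lt_d9, h1.1, h1.2, h2.1, h2.2, h3.1, h3.2]

lemma f_gt_at_b : 1 < H2 (2 * 0.0757) + H2 0.0757 := by
  have hlog2 : (0:ℝ) < Real.log 2 := Real.log_pos (by norm_num)
  rw [show (2:ℝ) * 0.0757 = 0.1514 by norm_num, H2_eq_binEntropy, H2_eq_binEntropy,
    ← add_div, lt_div_iff₀ hlog2, one_mul]
  unfold Real.binEntropy
  rw [Real.log_inv, Real.log_inv, Real.log_inv, Real.log_inv]
  have hsplit : Real.log 0.1514 = Real.log 2 + Real.log 0.0757 := by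
    rw [show (0.1514:ℝ) = 2 * 0.0757 by norm_num,
      Real.log_mul (by norm_num) (by norm_num)]
  have hp : Real.log 0.0757 = Real.log 1.2112 - 4 * Real.log 2 := by
    rw [show (0.0757:ℝ) = 1.2112 / 16 by norm_num,
      Real.log_div (by norm_num) (by norm_num), show (16:ℝ) = 2 ^ 4 by norm_num,
      Real.log_pow]
    push_cast
    ring
  have h1 := logTaylor (-0.2112) (by rw [show |(-0.2112:ℝ)| = 0.2112 by rw [abs_of_neg] <;> norm_num]; norm_num)
  rw [show (1:ℝ) - (-0.2112) = 1.2112 by norm_num,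
    show |(-0.2112:ℝ)| = 0.2112 by rw [abs_of_neg] <;> norm_num] at h1
  simp only [Finset.sum_range_succ, Finset.sum_range_zero] at h1
  have h2 := logTaylor 0.1514 (by rw [show |(0.1514:ℝ)| = 0.1514 by rw [abs_of_pos] <;> norm_num]; norm_num)
  rw [show (1:ℝ) - 0.1514 = 0.8486 by norm_num,
    show |(0.1514:ℝ)| = 0.1514 by rw [abs_of_pos] <;> norm_num] at h2
  simp only [Finset.sum_range_succ, Finset.sum_range_zero] at h2
  have h3 := logTaylor 0.0757 (by rw [show |(0.0757:ℝ)| = 0.0757 by rw [abs_of_pos] <;> norm_num]; norm_num)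
  rw [show (1:ℝ) - 0.0757 = 0.9243 by norm_num,
    show |(0.0757:ℝ)| = 0.0757 by rw [abs_of_pos] <;> norm_num] at h3
  simp only [Finset.sum_range_succ, Finset.sum_range_zero] at h3
  rw [hsplit, hp]
  norm_num at h1 h2 h3 ⊢
  linarith [Real.log_two_gt_d9, Real.log_two_lt_d9, h1.1, h1.2, h2.1, h2.2, h3.1, h3.2]

/-- The map `p ↦ H₂(2p) + H₂(p)` is strictly increasing on `(0, 1/4)`, and the
equation `H₂(2p) + H₂(p) = 1` has a solution `pstar` there with
`0.0756 < pstar < 0.0757` (the 7.56 % threshold). -/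
theorem stmt_19 :
    StrictMonoOn (fun p : ℝ => H2 (2 * p) + H2 p) (Set.Ioo 0 (1 / 4)) ∧
    ∃ pstar ∈ Set.Ioo (0 : ℝ) (1 / 4),
      H2 (2 * pstar) + H2 pstar = 1 ∧ 0.0756 < pstar ∧ pstar < 0.0757 := by
  have hlog2 : (0:ℝ) < Real.log 2 := Real.log_pos (by norm_num)
  constructor
  · intro x hx y hy hxy
    simp only [H2_eq_binEntropy, ← add_div]
    rw [div_lt_div_iff₀ hlog2 hlog2]
    have h1 : Real.binEntropy (2 * x) < Real.binEntropy (2 * y) :=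
      Real.binEntropy_strictMonoOn
        ⟨by linarith [hx.1], by linarith [hx.2]⟩
        ⟨by linarith [hy.1], by linarith [hy.2]⟩ (by linarith)
    have h2 : Real.binEntropy x < Real.binEntropy y :=
      Real.binEntropy_strictMonoOn
        ⟨hx.1.le, by linarith [hx.2]⟩
        ⟨hy.1.le, by linarith [hy.2]⟩ hxy
    nlinarith
  · have hcont : ContinuousOn (fun p : ℝ => H2 (2 * p) + H2 p) (Set.Icc 0.0756 0.0757) := by
      have : (fun p : ℝ => H2 (2 * p) + H2 p) =
          fun p : ℝ => (Real.binEntropy (2 * p) + Real.binEntropy p) / Real.log 2 := by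
        funext p; simp [H2_eq_binEntropy, ← add_div]
      rw [this]
      apply Continuous.continuousOn
      exact ((Real.binEntropy_continuous.comp (continuous_const.mul continuous_id)).add
        Real.binEntropy_continuous).div_const _
    have h1 : (1:ℝ) ∈ Set.Icc (H2 (2 * 0.0756) + H2 0.0756) (H2 (2 * 0.0757) + H2 0.0757) :=
      ⟨f_lt_at_a.le, f_gt_at_b.le⟩
    obtain ⟨c, hc, hfc⟩ := intermediate_value_Icc (by norm_num : (0.0756:ℝ) ≤ 0.0757) hcont h1
    have hca : 0.0756 < c := by
      rcases eq_or_lt_of_le hc.1 with h | h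
      · exfalso; rw [← h] at hfc; simp only at hfc; linarith [f_lt_at_a, hfc.le]
      · exact h
    have hcb : c < 0.0757 := by
      rcases eq_or_lt_of_le hc.2 with h | h
      · exfalso; rw [h] at hfc; simp only at hfc; linarith [f_gt_at_b, hfc.le]
      · exact h
    exact ⟨c, ⟨by linarith, by linarith⟩, hfc, hca, hcb⟩
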